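/- Consider the self-reproducing algebra $[G_1, G_\alpha] = G_1 G_\alpha$ ($\alpha = 2,\dots,n$), $[G_\alpha, G_\beta] = 0$. Define $T_1^{(k)} = G_1 \eta^{\alpha_1}\cdots\eta^{\alpha_k}\eta^1 \mathcal{P}_{\alpha_1}\cdots\mathcal{P}_{\alpha_k}$ and $T_2^{(k)} = G_{\alpha_k}\eta^{\alpha_1}\cdots\eta^{\alpha_k}\eta^1 \mathcal{P}_1 \mathcal{P}_{\alpha_1}\cdots\mathcal{P}_{\alpha_{k-1}}$ (summation over $\alpha_i \in \{2,\dots,n\}$), and $\Omega^{(0)} = \eta^a G_a$. Then the original-variable bracket satisfies $[T_1^{(k)}, \Omega^{(0)}]_{\mathrm{orig}} = (-1)^{k+1} S^{(k)}$, where $S^{(k)} = G_1 G_\alpha \eta^{\alpha_1}\cdots\eta^{\alpha_k}\eta^\alpha \eta^1 \mathcal{P}_{\alpha_1}\cdots\mathcal{P}_{\alpha_k}$. -/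
import Mathlib


open MvPolynomial Finset

/-- The extended algebra `ℚ[G₁,…,Gₙ] ⊗ Λ(η¹,…,ηⁿ,𝒫₁,…,𝒫ₙ)`: an element is given by
its polynomial coefficient on each monomial in the anticommuting ghosts `η^a`
(index `Sum.inl a`) and ghost momenta `𝒫_a` (index `Sum.inr a`), the Grassmann
monomial attached to a subset `S` being the product of its generators in
increasing order of `idx`. -/
abbrev SA (n : ℕ) := Finset (Fin n ⊕ Fin n) → MvPolynomial (Fin n) ℚ

/-- Position of a Grassmann generator in the chosen ordering: ghosts first. -/
def idx {n : ℕ} : Fin n ⊕ Fin n → ℕ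
  | Sum.inl a => (a : ℕ)
  | Sum.inr a => n + (a : ℕ)

/-- The Koszul sign produced when merging two ordered Grassmann monomials. -/
def sgn {n : ℕ} (T U : Finset (Fin n ⊕ Fin n)) : ℚ :=
  (-1 : ℚ) ^ ((T ×ˢ U).filter (fun p => idx p.2 < idx p.1)).card

/-- The (super-commutative) product of the extended algebra. -/
noncomputable def amul {n : ℕ} (x y : SA n) : SA n :=
  fun S => ∑ T ∈ S.powerset, sgn T (S \ T) • (x T * y (S \ T))

/-- The unit of the extended algebra. -/
noncomputable def aone {n : ℕ} : SA n := fun S => if S = ∅ then 1 else 0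

/-- The generator `G_a`. -/
noncomputable def Gg {n : ℕ} (a : Fin n) : SA n := fun S => if S = ∅ then X a else 0

/-- The ghost `η^a`. -/
noncomputable def ηg {n : ℕ} (a : Fin n) : SA n := fun S => if S = {Sum.inl a} then 1 else 0

/-- The ghost momentum `𝒫_a`. -/
noncomputable def Pg {n : ℕ} (a : Fin n) : SA n := fun S => if S = {Sum.inr a} then 1 else 0

/-- The (even) derivative `∂/∂G_a`. -/
noncomputable def dG {n : ℕ} (a : Fin n) (x : SA n) : SA n := fun S => (pderiv a) (x S)

/-- Left derivative with respect to the Grassmann generator `i`. -/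
noncomputable def dL {n : ℕ} (i : Fin n ⊕ Fin n) (x : SA n) : SA n := fun S =>
  if i ∈ S then 0
  else ((-1 : ℚ) ^ (S.filter (fun j => idx j < idx i)).card) • x (insert i S)

/-- Right derivative with respect to the Grassmann generator `i`. -/
noncomputable def dR {n : ℕ} (i : Fin n ⊕ Fin n) (x : SA n) : SA n := fun S =>
  if i ∈ S then 0
  else ((-1 : ℚ) ^ (S.filter (fun j => idx i < idx j)).card) • x (insert i S)

/-- The graded Poisson bracket of the extended algebra, determined by
`[G_a, G_b] = C a b` (a polynomial in the `G`'s), `[𝒫_a, η^b] = -δ_a^b`, all other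
basic brackets zero, extended by the graded Leibniz rule:
original (`G`) part plus ghost part. -/
noncomputable def bra {n : ℕ} (C : Fin n → Fin n → MvPolynomial (Fin n) ℚ)
    (x y : SA n) : SA n :=
  (∑ a, ∑ b, C a b • amul (dG a x) (dG b y))
  - ∑ a, (amul (dR (Sum.inr a) x) (dL (Sum.inl a) y)
          + amul (dR (Sum.inl a) x) (dL (Sum.inr a) y))

/-- Product of a list of elements of the extended algebra. -/
noncomputable def listProd {n : ℕ} (l : List (SA n)) : SA n := l.foldr amul aone

/-- Tuples of indices ranging over `{2,…,n}` (i.e. avoiding the first generator). -/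
def goodF (n k : ℕ) [NeZero n] : Finset (Fin k → Fin n) :=
  Finset.univ.filter (fun f => ∀ i, f i ≠ 0)

/-- `T₁^{(k)} = G₁ η^{α₁}⋯η^{α_k} η^1 𝒫_{α₁}⋯𝒫_{α_k}` (summation over
`α_i ∈ {2,…,n}`); the paper's generator `G₁` is `Gg 0`. -/
noncomputable def T1 (n k : ℕ) [NeZero n] : SA n :=
  ∑ f ∈ goodF n k,
    listProd (Gg 0 :: ((List.ofFn fun i : Fin k => ηg (f i)) ++ [ηg 0]
      ++ List.ofFn fun i : Fin k => Pg (f i)))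

/-- `S^{(k)} = G₁ G_α η^{α₁}⋯η^{α_k} η^α η^1 𝒫_{α₁}⋯𝒫_{α_k}` (summation over
`α, α_i ∈ {2,…,n}`). -/
noncomputable def Sel (n k : ℕ) [NeZero n] : SA n :=
  ∑ f ∈ goodF n k, ∑ al ∈ Finset.univ.filter (fun a : Fin n => a ≠ 0),
    listProd (Gg 0 :: Gg al :: ((List.ofFn fun i : Fin k => ηg (f i))
      ++ [ηg al, ηg 0] ++ List.ofFn fun i : Fin k => Pg (f i)))

/-- The bracket matrix of the self-reproducing algebra `[G₁,G_α] = G₁ G_α`,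
`[G_α,G_β] = 0`. -/
noncomputable def Cself (n : ℕ) [NeZero n] : Fin n → Fin n → MvPolynomial (Fin n) ℚ :=
  fun a b =>
    if a = b then 0
    else if a = 0 then X 0 * X b
    else if b = 0 then -(X 0 * X a)
    else 0

/-- The 'original' bracket `[·,·]_orig`, acting only on the `G`-dependence via the
Poisson algebra relations `[G_a, G_b] = C a b`, extended by the Leibniz rule. -/
noncomputable def braOrig {n : ℕ} (C : Fin n → Fin n → MvPolynomial (Fin n) ℚ)
    (x y : SA n) : SA n :=
  ∑ a, ∑ b, C a b • amul (dG a x) (dG b y)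

/-- `Ω^{(0)} = η^a G_a`. -/
noncomputable def Ω0 (n : ℕ) : SA n := ∑ a, amul (ηg a) (Gg a)

section Aux

open List

variable {n : ℕ}

/-- Basis "monomial" element of the extended algebra. -/
noncomputable def mono (A : Finset (Fin n ⊕ Fin n)) (p : MvPolynomial (Fin n) ℚ) : SA n :=
  fun S => if S = A then p else 0

lemma mono_zero (A : Finset (Fin n ⊕ Fin n)) :
    mono A (0 : MvPolynomial (Fin n) ℚ) = 0 := by
  funext S; simp [mono]

lemma idx_injective : Function.Injective (idx (n := n)) := by
  rintro (a | a) (b | b) h <;> simp only [idx] at h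
  · exact congrArg _ (Fin.val_injective h)
  · exact absurd h (by have := a.isLt; omega)
  · exact absurd h (by have := b.isLt; omega)
  · exact congrArg _ (Fin.val_injective (by omega))

lemma sgn_empty_left (B : Finset (Fin n ⊕ Fin n)) : sgn (∅ : Finset (Fin n ⊕ Fin n)) B = 1 := by
  simp [sgn]

lemma sgn_empty_right (A : Finset (Fin n ⊕ Fin n)) : sgn A (∅ : Finset (Fin n ⊕ Fin n)) = 1 := by
  simp [sgn]

lemma sgn_union_left {A B : Finset (Fin n ⊕ Fin n)} (D : Finset (Fin n ⊕ Fin n))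
    (h : Disjoint A B) : sgn (A ∪ B) D = sgn A D * sgn B D := by
  unfold sgn
  rw [← pow_add]
  congr 1
  rw [Finset.union_product, Finset.filter_union, Finset.card_union_of_disjoint]
  exact Finset.disjoint_filter_filter
    (Finset.disjoint_left.2 fun p hp hq =>
      (Finset.disjoint_left.1 h) (Finset.mem_product.1 hp).1 (Finset.mem_product.1 hq).1)

lemma sgn_union_right (A : Finset (Fin n ⊕ Fin n)) {B D : Finset (Fin n ⊕ Fin n)}
    (h : Disjoint B D) : sgn A (B ∪ D) = sgn A B * sgn A D := by
  unfold sgn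
  rw [← pow_add]
  congr 1
  rw [Finset.product_union, Finset.filter_union, Finset.card_union_of_disjoint]
  exact Finset.disjoint_filter_filter
    (Finset.disjoint_left.2 fun p hp hq =>
      (Finset.disjoint_left.1 h) (Finset.mem_product.1 hp).2 (Finset.mem_product.1 hq).2)

lemma sgn_singleton_right (A : Finset (Fin n ⊕ Fin n)) (i : Fin n ⊕ Fin n) :
    sgn A {i} = (-1 : ℚ) ^ (A.filter (fun a => idx i < idx a)).card := by
  unfold sgn
  congr 1
  rw [Finset.product_singleton, Finset.filter_map, Finset.card_map]
  rfl

lemma sgn_singleton_left (i : Fin n ⊕ Fin n) (A : Finset (Fin n ⊕ Fin n)) :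
    sgn {i} A = (-1 : ℚ) ^ (A.filter (fun a => idx a < idx i)).card := by
  unfold sgn
  congr 1
  rw [Finset.singleton_product, Finset.filter_map, Finset.card_map]
  rfl

lemma sgn_singleton_comm {A : Finset (Fin n ⊕ Fin n)} {i : Fin n ⊕ Fin n} (h : i ∉ A) :
    sgn A {i} = (-1 : ℚ) ^ A.card * sgn {i} A := by
  rw [sgn_singleton_right, sgn_singleton_left]
  have hsum : (A.filter (fun a => idx i < idx a)).card
      + (A.filter (fun a => idx a < idx i)).card = A.card := by
    have h2 : A.filter (fun a => idx a < idx i) = A.filter (fun a => ¬ idx i < idx a) := by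
      refine Finset.filter_congr fun a ha => ?_
      have hne : idx a ≠ idx i := fun e => h (idx_injective e ▸ ha)
      constructor <;> intro <;> omega
    rw [h2, Finset.card_filter_add_card_filter_not]
  rw [← hsum, pow_add, mul_assoc, ← mul_pow]
  norm_num

lemma amul_mono (A B : Finset (Fin n ⊕ Fin n)) (p q : MvPolynomial (Fin n) ℚ) :
    amul (mono A p) (mono B q) =
      if Disjoint A B then mono (A ∪ B) (sgn A B • (p * q)) else 0 := by
  by_cases hd : Disjoint A B
  · rw [if_pos hd]
    funext S
    by_cases hS : S = A ∪ B
    · subst hS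
      rw [show amul (mono A p) (mono B q) (A ∪ B)
          = ∑ T ∈ (A ∪ B).powerset, sgn T ((A ∪ B) \ T) • (mono A p T * mono B q ((A ∪ B) \ T))
          from rfl]
      rw [Finset.sum_eq_single_of_mem A (Finset.mem_powerset.2 Finset.subset_union_left)
        (fun T _ hT => by simp [mono, hT])]
      rw [Finset.union_sdiff_cancel_left hd]
      simp [mono]
    · show (∑ T ∈ S.powerset, sgn T (S \ T) • (mono A p T * mono B q (S \ T))) = _
      rw [Finset.sum_eq_zero, mono, if_neg hS]
      intro T hT
      by_cases hTA : T = A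
      · subst hTA
        have hAS := Finset.mem_powerset.1 hT
        have : S \ T ≠ B := fun e => hS (by rw [← e, Finset.union_sdiff_of_subset hAS])
        simp [mono, this]
      · simp [mono, hTA]
  · rw [if_neg hd]
    funext S
    show (∑ T ∈ S.powerset, sgn T (S \ T) • (mono A p T * mono B q (S \ T))) = 0
    rw [Finset.sum_eq_zero]
    intro T hT
    by_cases hTA : T = A
    · subst hTA
      have : S \ T ≠ B := fun e => hd (e ▸ Finset.disjoint_sdiff)
      simp [mono, this]
    · simp [mono, hTA]

lemma amul_monoEmpty_left (p : MvPolynomial (Fin n) ℚ) (x : SA n) :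
    amul (mono ∅ p) x = p • x := by
  funext S
  show (∑ T ∈ S.powerset, sgn T (S \ T) • (mono ∅ p T * x (S \ T))) = p • x S
  rw [Finset.sum_eq_single_of_mem ∅ (Finset.empty_mem_powerset S)
    (fun T _ hT => by simp [mono, hT])]
  simp [mono, sgn_empty_left, smul_eq_mul]

lemma zero_amul (y : SA n) : amul 0 y = 0 := by
  funext S; show (∑ T ∈ S.powerset, sgn T (S \ T) • ((0:SA n) T * y (S \ T))) = 0
  simp

lemma amul_zero (x : SA n) : amul x 0 = 0 := by
  funext S; show (∑ T ∈ S.powerset, sgn T (S \ T) • (x T * (0:SA n) (S \ T))) = 0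
  simp

lemma amul_smul_left (c : ℚ) (x y : SA n) : amul (c • x) y = c • amul x y := by
  funext S
  simp only [amul, Pi.smul_apply, smul_mul_assoc, Finset.smul_sum]
  exact Finset.sum_congr rfl fun T _ => smul_comm _ _ _

lemma amul_smul_right (c : ℚ) (x y : SA n) : amul x (c • y) = c • amul x y := by
  funext S
  simp only [amul, Pi.smul_apply, mul_smul_comm, Finset.smul_sum]
  exact Finset.sum_congr rfl fun T _ => smul_comm _ _ _

lemma amul_psmul_left (p : MvPolynomial (Fin n) ℚ) (x y : SA n) :
    amul (p • x) y = p • amul x y := by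
  funext S
  simp only [amul, Pi.smul_apply, smul_eq_mul, Finset.mul_sum]
  refine Finset.sum_congr rfl fun T _ => ?_
  rw [mul_assoc, mul_smul_comm]

lemma amul_psmul_right (p : MvPolynomial (Fin n) ℚ) (x y : SA n) :
    amul x (p • y) = p • amul x y := by
  funext S
  simp only [amul, Pi.smul_apply, smul_eq_mul, Finset.mul_sum]
  refine Finset.sum_congr rfl fun T _ => ?_
  rw [mul_left_comm, mul_smul_comm]

lemma amul_sum_left {ι : Type*} (s : Finset ι) (x : ι → SA n) (y : SA n) :
    amul (∑ i ∈ s, x i) y = ∑ i ∈ s, amul (x i) y := by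
  funext S
  simp only [amul, Finset.sum_apply, Finset.sum_mul, Finset.smul_sum]
  exact Finset.sum_comm

lemma dG_mono (a : Fin n) (A : Finset (Fin n ⊕ Fin n)) (p : MvPolynomial (Fin n) ℚ) :
    dG a (mono A p) = mono A (pderiv a p) := by
  funext S
  simp [dG, mono, apply_ite (pderiv a)]

lemma dG_sum {ι : Type*} (a : Fin n) (s : Finset ι) (x : ι → SA n) :
    dG a (∑ i ∈ s, x i) = ∑ i ∈ s, dG a (x i) := by
  funext S
  simp [dG, Finset.sum_apply]

lemma qsmul_mono (c : ℚ) (A : Finset (Fin n ⊕ Fin n)) (p : MvPolynomial (Fin n) ℚ) :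
    c • mono A p = mono A (c • p) := by
  funext S; by_cases h : S = A <;> simp [mono, h]

lemma psmul_mono (p : MvPolynomial (Fin n) ℚ) (A : Finset (Fin n ⊕ Fin n))
    (q : MvPolynomial (Fin n) ℚ) : p • mono A q = mono A (p * q) := by
  funext S; by_cases h : S = A <;> simp [mono, h]

lemma assoc3 (A B D : Finset (Fin n ⊕ Fin n)) (p q r : MvPolynomial (Fin n) ℚ) :
    amul (amul (mono A p) (mono B q)) (mono D r)
      = amul (mono A p) (amul (mono B q) (mono D r)) := by
  rw [amul_mono A B]
  by_cases hAB : Disjoint A B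
  · rw [if_pos hAB, amul_mono, amul_mono]
    by_cases hBD : Disjoint B D
    · rw [if_pos hBD, amul_mono]
      simp only [Finset.disjoint_union_left, Finset.disjoint_union_right]
      by_cases hAD : Disjoint A D
      · rw [if_pos ⟨hAD, hBD⟩, if_pos ⟨hAB, hAD⟩, Finset.union_assoc]
        congr 1
        rw [smul_mul_assoc, mul_smul_comm, smul_smul, smul_smul,
          sgn_union_left D hAB, sgn_union_right A hBD, mul_assoc p q r]
        congr 1
        ring_nf
      · rw [if_neg (by tauto), if_neg (by tauto)]
    · rw [if_neg hBD, if_neg (fun hc => hBD (Finset.disjoint_union_left.1 hc).2), amul_zero]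
  · rw [if_neg hAB, zero_amul, amul_mono]
    by_cases hBD : Disjoint B D
    · rw [if_pos hBD, amul_mono, if_neg (fun hc => hAB (Finset.disjoint_union_right.1 hc).1)]
    · rw [if_neg hBD, amul_zero]

/-- Grassmann generator as an algebra element. -/
noncomputable def eg (i : Fin n ⊕ Fin n) : SA n := mono {i} 1

lemma eg_inl (a : Fin n) : eg (Sum.inl a) = ηg a := rfl
lemma eg_inr (a : Fin n) : eg (Sum.inr a) = Pg a := rfl

lemma listProd_cons (x : SA n) (l : List (SA n)) :
    listProd (x :: l) = amul x (listProd l) := rfl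

/-- The sign/coefficient of a list of Grassmann generators. -/
def ε : List (Fin n ⊕ Fin n) → ℚ
  | [] => 1
  | i :: t => (if i ∈ t.toFinset then 0 else sgn {i} t.toFinset) * ε t

lemma E_eq : ∀ l : List (Fin n ⊕ Fin n),
    listProd (l.map eg) = mono l.toFinset (ε l • 1)
  | [] => by
      funext S; simp [listProd, aone, mono, ε]
  | i :: t => by
      rw [List.map_cons, listProd_cons, E_eq t, show (eg i : SA n) = mono {i} 1 from rfl,
        amul_mono]
      by_cases h : i ∈ t.toFinset
      · rw [if_neg (by simp [Finset.disjoint_singleton_left, h])]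
        have : ε (i :: t) = 0 := by simp [ε, h]
        rw [this, zero_smul, mono_zero]
      · rw [if_pos (by simp [Finset.disjoint_singleton_left, h])]
        rw [List.toFinset_cons, ← Finset.insert_eq]
        congr 1
        simp [ε, h, smul_smul]

lemma ε_not_nodup : ∀ {l : List (Fin n ⊕ Fin n)}, ¬l.Nodup → ε l = 0
  | [], h => absurd List.nodup_nil h
  | i :: t, h => by
      by_cases hit : i ∈ t.toFinset
      · simp [ε, hit]
      · have : ¬t.Nodup := fun hn =>
          h (List.nodup_cons.2 ⟨fun hm => hit (List.mem_toFinset.2 hm), hn⟩)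
        simp [ε, ε_not_nodup this]

lemma E_append : ∀ (u v : List (Fin n ⊕ Fin n)),
    listProd ((u ++ v).map eg) = amul (listProd (u.map eg)) (listProd (v.map eg))
  | [], v => by
      rw [List.nil_append, List.map_nil, show (listProd ([] : List (SA n)) : SA n) = aone
        from rfl, show (aone : SA n) = mono ∅ 1 from rfl, amul_monoEmpty_left, one_smul]
  | i :: u, v => by
      rw [List.cons_append, List.map_cons, listProd_cons, E_append u v, List.map_cons,
        listProd_cons, E_eq u, E_eq v, show (eg i : SA n) = mono {i} 1 from rfl, assoc3]

lemma amul_E_single (v : List (Fin n ⊕ Fin n)) (b : Fin n ⊕ Fin n)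
    (hb : b ∉ v) (hv : v.Nodup) :
    amul (listProd (v.map eg)) (eg b)
      = ((-1:ℚ) ^ v.length) • listProd ((b :: v).map eg) := by
  have hbv : b ∉ v.toFinset := by simpa using hb
  rw [E_eq v, show (eg b : SA n) = mono {b} 1 from rfl, amul_mono,
    if_pos (Finset.disjoint_singleton_right.2 hbv), E_eq (b :: v), List.toFinset_cons,
    qsmul_mono, Finset.union_comm, ← Finset.insert_eq]
  congr 1
  rw [mul_one, smul_smul, smul_smul]
  have : ε (b :: v) = sgn {b} v.toFinset * ε v := by simp [ε, hbv]
  rw [this, sgn_singleton_comm hbv, List.toFinset_card_of_nodup hv]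
  ring_nf

lemma core (u v : List (Fin n ⊕ Fin n)) (b : Fin n ⊕ Fin n) :
    amul (listProd ((u ++ v).map eg)) (eg b)
      = ((-1:ℚ) ^ v.length) • listProd ((u ++ b :: v).map eg) := by
  by_cases hnd : (b :: (u ++ v)).Nodup
  · obtain ⟨hb, huv⟩ := List.nodup_cons.1 hnd
    have hv : v.Nodup := huv.of_append_right
    have hbv : b ∉ v := fun h => hb (List.mem_append.2 (Or.inr h))
    rw [E_append u v]
    have h1 : amul (amul (listProd (u.map eg)) (listProd (v.map eg))) (eg b)
        = amul (listProd (u.map eg)) (amul (listProd (v.map eg)) (eg b)) := by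
      rw [E_eq u, E_eq v, show (eg b : SA n) = mono {b} 1 from rfl, assoc3]
    rw [h1, amul_E_single v b hbv hv, amul_smul_right, ← E_append u (b :: v)]
  · have hnd' : ¬(u ++ b :: v).Nodup := fun h =>
      hnd ((List.perm_middle).nodup_iff.1 h)
    rw [E_eq (u ++ b :: v), ε_not_nodup hnd', zero_smul, mono_zero, smul_zero]
    by_cases huv : (u ++ v).Nodup
    · have hbuv : b ∈ u ++ v := by
        by_contra h; exact hnd (List.nodup_cons.2 ⟨h, huv⟩)
      rw [E_eq (u ++ v), show (eg b : SA n) = mono {b} 1 from rfl, amul_mono,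
        if_neg (fun hc => (Finset.disjoint_singleton_right.1 hc) (List.mem_toFinset.2 hbuv))]
    · rw [E_eq (u ++ v), ε_not_nodup huv, zero_smul, mono_zero, zero_amul]

lemma smul_qsmul (p : MvPolynomial (Fin n) ℚ) (c : ℚ) (x : SA n) :
    p • (c • x) = c • (p • x) := by
  funext S
  simp only [Pi.smul_apply, smul_eq_mul]
  exact mul_smul_comm c p (x S)

lemma dG_Ω0 (b : Fin n) : dG b (Ω0 n) = ηg b := by
  have h1 : Ω0 n = ∑ a : Fin n, mono {Sum.inl a} (X a) := by
    unfold Ω0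
    refine Finset.sum_congr rfl fun a _ => ?_
    rw [show (ηg a : SA n) = mono {Sum.inl a} 1 from rfl,
      show (Gg a : SA n) = mono ∅ (X a) from rfl, amul_mono,
      if_pos (Finset.disjoint_empty_right _)]
    simp [sgn_empty_right]
  rw [h1, dG_sum]
  simp only [dG_mono]
  rw [Finset.sum_eq_single b (fun a _ ha => by
      rw [pderiv_X_of_ne ha, mono_zero]) (fun h => absurd (Finset.mem_univ b) h)]
  rw [pderiv_X_self]
  rfl

variable [NeZero n] {k : ℕ}

def uL (f : Fin k → Fin n) : List (Fin n ⊕ Fin n) := List.ofFn fun i => Sum.inl (f i)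

def vL (f : Fin k → Fin n) : List (Fin n ⊕ Fin n) :=
  Sum.inl 0 :: List.ofFn fun i => Sum.inr (f i)

lemma vL_length (f : Fin k → Fin n) : (vL f).length = k + 1 := by simp [vL]

lemma T1_list (f : Fin k → Fin n) :
    (List.ofFn fun i : Fin k => ηg (f i)) ++ [ηg 0]
      ++ (List.ofFn fun i : Fin k => Pg (f i)) = (uL f ++ vL f).map eg := by
  simp only [uL, vL, List.map_ofFn, List.map_append, List.map_cons, List.append_assoc,
    List.singleton_append]
  rfl

lemma Sel_list (f : Fin k → Fin n) (al : Fin n) :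
    (List.ofFn fun i : Fin k => ηg (f i)) ++ [ηg al, ηg 0]
      ++ (List.ofFn fun i : Fin k => Pg (f i)) = (uL f ++ Sum.inl al :: vL f).map eg := by
  simp only [uL, vL, List.map_ofFn, List.map_append, List.map_cons, List.append_assoc,
    List.cons_append, List.singleton_append]
  rfl

lemma T1_eq : T1 n k = ∑ f ∈ goodF n k,
    mono ((uL f ++ vL f).toFinset) (ε (uL f ++ vL f) • X (0 : Fin n)) := by
  unfold T1
  refine Finset.sum_congr rfl fun f _ => ?_
  rw [T1_list f, listProd_cons, show (Gg (0:Fin n) : SA n) = mono ∅ (X 0) from rfl,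
    amul_monoEmpty_left, E_eq, psmul_mono]
  congr 1
  rw [mul_smul_comm, mul_one]

lemma dG_T1 (a : Fin n) : dG a (T1 n k)
    = if a = 0 then (∑ f ∈ goodF n k,
        mono ((uL f ++ vL f).toFinset) (ε (uL f ++ vL f) • 1)) else 0 := by
  rw [T1_eq, dG_sum]
  simp only [dG_mono, Derivation.map_smul]
  by_cases ha : a = 0
  · subst ha
    rw [if_pos rfl]
    refine Finset.sum_congr rfl fun f _ => ?_
    rw [pderiv_X_self]
  · rw [if_neg ha]
    refine Finset.sum_eq_zero fun f _ => ?_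
    rw [pderiv_X_of_ne (fun e => ha e.symm), smul_zero, mono_zero]

lemma Sel_eq : Sel n k = ∑ f ∈ goodF n k,
    ∑ al ∈ Finset.univ.filter (fun a : Fin n => a ≠ 0),
      ((X 0 * X al : MvPolynomial (Fin n) ℚ)) • listProd ((uL f ++ Sum.inl al :: vL f).map eg) := by
  unfold Sel
  refine Finset.sum_congr rfl fun f _ => Finset.sum_congr rfl fun al _ => ?_
  rw [Sel_list f al, listProd_cons, listProd_cons,
    show (Gg (0:Fin n) : SA n) = mono ∅ (X 0) from rfl,
    show (Gg al : SA n) = mono ∅ (X al) from rfl,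
    amul_monoEmpty_left, amul_monoEmpty_left, smul_smul]

end Aux

/-- `[T₁^{(k)}, Ω^{(0)}]_orig = (-1)^{k+1} S^{(k)}` for the
self-reproducing algebra. -/
theorem braOrig_T1_omega0 (n : ℕ) [NeZero n] (k : ℕ) :
    braOrig (Cself n) (T1 n k) (Ω0 n) = ((-1 : ℚ) ^ (k + 1)) • Sel n k := by
  have hL : braOrig (Cself n) (T1 n k) (Ω0 n)
      = ∑ f ∈ goodF n k, ∑ b : Fin n,
          Cself n 0 b • amul (mono ((uL f ++ vL f).toFinset) (ε (uL f ++ vL f) • 1)) (ηg b) := by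
    unfold braOrig
    rw [Finset.sum_eq_single (0 : Fin n)]
    · refine (Finset.sum_congr rfl fun b _ => ?_).trans Finset.sum_comm
      rw [dG_T1, if_pos rfl, dG_Ω0, amul_sum_left, Finset.smul_sum]
    · intro a _ ha
      rw [dG_T1, if_neg ha]
      refine Finset.sum_eq_zero fun b _ => ?_
      rw [zero_amul, smul_zero]
    · intro h; exact absurd (Finset.mem_univ _) h
  rw [hL, Sel_eq, Finset.smul_sum]
  refine Finset.sum_congr rfl fun f _ => ?_
  rw [Finset.smul_sum, Finset.sum_filter]
  refine Finset.sum_congr rfl fun b _ => ?_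
  by_cases hb : b = 0
  · subst hb
    rw [if_neg (by simp)]
    have hC : Cself n 0 0 = 0 := by simp [Cself]
    rw [hC, zero_smul]
  · rw [if_pos hb]
    have hC : Cself n 0 b = X 0 * X b := by
      unfold Cself
      rw [if_neg (fun e => hb e.symm), if_pos rfl]
    rw [hC, show (ηg b : SA n) = eg (Sum.inl b) from rfl,
      ← E_eq (uL f ++ vL f), core (uL f) (vL f) (Sum.inl b), vL_length]
    exact smul_qsmul _ _ _
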